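/- arXiv:1408.6706 — 2 statements merged into one kernel-verified Lean document; each statement's English description precedes it below -/
import Mathlib

section
/- Let (S,R) be an argumentation network, V₀ : S → [0,1] an initial assignment, and (V_i) the Gabbay-Rodrigues iteration sequence from V₀. Then for all 0 ≤ i ≤ j, in(V_j) ⊆ in(V_i) and out(V_j) ⊆ out(V_i). -/
open Filter Topology

variable {S : Type*}

/-- Maximum of `V` over the attackers of `X` (i.e. `{Y | R Y X}`),
with the convention that the maximum over the empty set is `0`. -/
noncomputable def attMax [Fintype S] (R : S → S → Prop) [DecidableRel R] (V : S → ℝ) (X : S) : ℝ :=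
  (Finset.univ.filter (fun Y => R Y X)).fold max 0 V

/-- One step of the Gabbay-Rodrigues iteration. -/
noncomputable def grStep [Fintype S] (R : S → S → Prop) [DecidableRel R] (V : S → ℝ) (X : S) : ℝ :=
  (1 - V X) * min (1/2) (1 - attMax R V X) + V X * max (1/2) (1 - attMax R V X)

/-- The Gabbay-Rodrigues iteration sequence from the initial assignment `V0`. -/
noncomputable def grSeq [Fintype S] (R : S → S → Prop) [DecidableRel R] (V0 : S → ℝ) : ℕ → S → ℝ
  | 0 => V0
  | i + 1 => grStep R (grSeq R V0 i)

def inSet (V : S → ℝ) : Set S := {X | V X = 1}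

def outSet (V : S → ℝ) : Set S := {X | V X = 0}

def conflictFree (R : S → S → Prop) (E : Set S) : Prop := ∀ X ∈ E, ∀ Y ∈ E, ¬ R X Y

def acceptable (R : S → S → Prop) (E : Set S) (X : S) : Prop := ∀ Y, R Y X → ∃ Z ∈ E, R Z Y

def admissible (R : S → S → Prop) (E : Set S) : Prop :=
  conflictFree R E ∧ ∀ X ∈ E, acceptable R E X

def completeExt (R : S → S → Prop) (E : Set S) : Prop :=
  admissible R E ∧ ∀ X, acceptable R E X → X ∈ E

/-- `E⁺` : the set of arguments attacked by `E`. -/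
def plusSet (R : S → S → Prop) (E : Set S) : Set S := {X | ∃ Y ∈ E, R Y X}

/-- The GR sequence is stable at iteration `k` if every node with a crisp value at
iteration `k` keeps that value at iteration `k+1`. -/
def grStable [Fintype S] (R : S → S → Prop) [DecidableRel R] (V0 : S → ℝ) (k : ℕ) : Prop :=
  ∀ X : S, (grSeq R V0 k X = 0 ∨ grSeq R V0 k X = 1) → grSeq R V0 (k + 1) X = grSeq R V0 k X


lemma attMax_mem [Fintype S] (R : S → S → Prop) [DecidableRel R] (V : S → ℝ)
    (hV : ∀ X, V X ∈ Set.Icc (0:ℝ) 1) (X : S) : attMax R V X ∈ Set.Icc (0:ℝ) 1 := by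
  unfold attMax
  constructor
  · exact (Finset.le_fold_max 0).mpr (Or.inl le_rfl)
  · exact (Finset.fold_max_le 1).mpr ⟨zero_le_one, fun Y _ => (hV Y).2⟩

lemma grStep_crisp [Fintype S] (R : S → S → Prop) [DecidableRel R] (V : S → ℝ)
    (hV : ∀ X, V X ∈ Set.Icc (0:ℝ) 1) (X : S) :
    (grStep R V X = 1 → V X = 1) ∧ (grStep R V X = 0 → V X = 0) := by
  have hM := attMax_mem R V hV X
  obtain ⟨hM0, hM1⟩ := hM
  obtain ⟨hv0, hv1⟩ := hV X
  unfold grStep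
  set m := min (1/2 : ℝ) (1 - attMax R V X) with hm
  set Mx := max (1/2 : ℝ) (1 - attMax R V X) with hMx
  have hm0 : 0 ≤ m := le_min (by norm_num) (by linarith)
  have hmh : m ≤ 1/2 := min_le_left _ _
  have hMh : (1/2 : ℝ) ≤ Mx := le_max_left _ _
  have hM1' : Mx ≤ 1 := max_le (by norm_num) (by linarith)
  constructor
  · intro h; nlinarith
  · intro h; nlinarith

lemma grSeq_mem [Fintype S] (R : S → S → Prop) [DecidableRel R] (V0 : S → ℝ)
    (hV0 : ∀ X, V0 X ∈ Set.Icc (0:ℝ) 1) : ∀ i X, grSeq R V0 i X ∈ Set.Icc (0:ℝ) 1 := by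
  intro i
  induction i with
  | zero => exact hV0
  | succ n ih =>
    intro X
    have hM := attMax_mem R (grSeq R V0 n) ih X
    obtain ⟨hM0, hM1⟩ := hM
    obtain ⟨hv0, hv1⟩ := ih X
    show grStep R (grSeq R V0 n) X ∈ Set.Icc (0:ℝ) 1
    unfold grStep
    set m := min (1/2 : ℝ) (1 - attMax R (grSeq R V0 n) X) with hm
    set Mx := max (1/2 : ℝ) (1 - attMax R (grSeq R V0 n) X) with hMx
    have hm0 : 0 ≤ m := le_min (by norm_num) (by linarith)
    have hmh : m ≤ 1/2 := min_le_left _ _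
    have hMh : (1/2 : ℝ) ≤ Mx := le_max_left _ _
    have hM1' : Mx ≤ 1 := max_le (by norm_num) (by linarith)
    constructor
    · nlinarith
    · nlinarith

theorem stmt8 [Fintype S] [Nonempty S] (R : S → S → Prop) [DecidableRel R]
    (V0 : S → ℝ) (hV0 : ∀ X, V0 X ∈ Set.Icc (0:ℝ) 1) :
    ∀ i j : ℕ, i ≤ j →
      inSet (grSeq R V0 j) ⊆ inSet (grSeq R V0 i) ∧
      outSet (grSeq R V0 j) ⊆ outSet (grSeq R V0 i) := by
  have step : ∀ k : ℕ,
      inSet (grSeq R V0 (k+1)) ⊆ inSet (grSeq R V0 k) ∧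
      outSet (grSeq R V0 (k+1)) ⊆ outSet (grSeq R V0 k) := by
    intro k
    have hmem := grSeq_mem R V0 hV0 k
    exact ⟨fun X hX => (grStep_crisp R (grSeq R V0 k) hmem X).1 hX,
           fun X hX => (grStep_crisp R (grSeq R V0 k) hmem X).2 hX⟩
  intro i j hij
  induction j, hij using Nat.le_induction with
  | base => exact ⟨subset_rfl, subset_rfl⟩
  | succ n hn ih =>
    exact ⟨fun x hx => ih.1 ((step n).1 hx), fun x hx => ih.2 ((step n).2 hx)⟩
end

section
/- Let (S,R) be an argumentation network, V₀ : S → [0,1] an initial assignment, and (V_i) the Gabbay-Rodrigues iteration sequence from V₀. If the sequence is stable at iteration k, then: (1) in(V_k) is an admissible set with in(V_k) ⊆ in(V₀) and out(V_k) ⊆ out(V₀); and (2) for every h : S → [0,1] with in(h) ⊆ in(V₀) and out(h) ⊆ out(V₀) such that h(X) = 1 implies h(Y) = 0 for all Y ∈ Att(X) and h(X) = 0 implies h(Y) = 1 for some Y ∈ Att(X), we have in(h) ⊆ in(V_k) and out(h) ⊆ out(V_k). -/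
open Filter Topology

variable {S : Type*}

section Aux

variable {S : Type*} [Fintype S] (R : S → S → Prop) [DecidableRel R]

lemma attMax_nonneg (V : S → ℝ) (X : S) : 0 ≤ attMax R V X := by
  rw [attMax, Finset.le_fold_max]; exact Or.inl le_rfl

lemma attMax_le_one (V : S → ℝ) (hV : ∀ Y, V Y ≤ 1) (X : S) : attMax R V X ≤ 1 := by
  rw [attMax, Finset.fold_max_le]
  exact ⟨zero_le_one, fun x _ => hV x⟩

lemma attMax_eq_zero (V : S → ℝ) (h : ∀ Y, R Y X → V Y = 0) : attMax R V X = 0 := by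
  refine le_antisymm ?_ (attMax_nonneg R V X)
  rw [attMax, Finset.fold_max_le]
  refine ⟨le_rfl, fun x hx => ?_⟩
  simp only [Finset.mem_filter] at hx
  exact (h x hx.2).le

lemma attMax_eq_one (V : S → ℝ) (hV : ∀ Y, V Y ≤ 1) {X Y : S} (hR : R Y X) (hY : V Y = 1) :
    attMax R V X = 1 := by
  refine le_antisymm (attMax_le_one R V hV X) ?_
  rw [attMax, Finset.le_fold_max]
  exact Or.inr ⟨Y, by simp [hR], hY.ge⟩

lemma forall_of_attMax_zero (V : S → ℝ) (hV : ∀ Y, 0 ≤ V Y) {X : S}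
    (h : attMax R V X = 0) : ∀ Y, R Y X → V Y = 0 := by
  intro Y hR
  have := (Finset.fold_max_le (b := (0:ℝ)) (f := V)
    (s := Finset.univ.filter (fun Y => R Y X)) (c := (0:ℝ))).mp h.le
  exact le_antisymm (this.2 Y (by simp [hR])) (hV Y)

lemma exists_of_attMax_one (V : S → ℝ) (hV : ∀ Y, V Y ≤ 1) {X : S}
    (h : attMax R V X = 1) : ∃ Y, R Y X ∧ V Y = 1 := by
  have h1 : (1:ℝ) ≤ attMax R V X := h.ge
  rw [attMax, Finset.le_fold_max] at h1
  rcases h1 with h1 | ⟨Y, hY, hle⟩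
  · norm_num at h1
  · simp only [Finset.mem_filter] at hY
    exact ⟨Y, hY.2, le_antisymm (hV Y) hle⟩

lemma grStep_mem_Icc (V : S → ℝ) (hV : ∀ X, V X ∈ Set.Icc (0:ℝ) 1) (X : S) :
    grStep R V X ∈ Set.Icc (0:ℝ) 1 := by
  obtain ⟨h0, h1⟩ := hV X
  have hm0 := attMax_nonneg R V X
  have hm1 := attMax_le_one R V (fun Y => (hV Y).2) X
  unfold grStep
  constructor
  · have ha : (0:ℝ) ≤ min (1/2) (1 - attMax R V X) := le_min (by norm_num) (by linarith)
    have hb : (0:ℝ) ≤ max (1/2) (1 - attMax R V X) := le_trans (by norm_num) (le_max_left _ _)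
    exact add_nonneg (mul_nonneg (by linarith) ha) (mul_nonneg h0 hb)
  · have ha : min (1/2) (1 - attMax R V X) ≤ 1 := le_trans (min_le_left _ _) (by norm_num)
    have hb : max (1/2) (1 - attMax R V X) ≤ 1 := max_le (by norm_num) (by linarith)
    nlinarith

lemma grStep_eq_one (V : S → ℝ) (hV : ∀ X, V X ∈ Set.Icc (0:ℝ) 1) {X : S}
    (h : grStep R V X = 1) : V X = 1 := by
  obtain ⟨h0, h1⟩ := hV X
  have hm0 := attMax_nonneg R V X
  have ha : min (1/2) (1 - attMax R V X) ≤ 1/2 := min_le_left _ _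
  have hb : max (1/2) (1 - attMax R V X) ≤ 1 := max_le (by norm_num) (by linarith)
  have ha0 : (0:ℝ) ≤ max (1/2) (1 - attMax R V X) := le_trans (by norm_num) (le_max_left _ _)
  unfold grStep at h
  nlinarith

lemma grStep_eq_zero (V : S → ℝ) (hV : ∀ X, V X ∈ Set.Icc (0:ℝ) 1) {X : S}
    (h : grStep R V X = 0) : V X = 0 := by
  obtain ⟨h0, h1⟩ := hV X
  have hm1 := attMax_le_one R V (fun Y => (hV Y).2) X
  have ha : (0:ℝ) ≤ min (1/2) (1 - attMax R V X) := le_min (by norm_num) (by linarith)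
  have hb : (1:ℝ)/2 ≤ max (1/2) (1 - attMax R V X) := le_max_left _ _
  unfold grStep at h
  nlinarith

lemma grStep_one_of (V : S → ℝ) {X : S} (hv : V X = 1) (hm : attMax R V X = 0) :
    grStep R V X = 1 := by
  unfold grStep; rw [hv, hm]; norm_num

lemma grStep_zero_of (V : S → ℝ) {X : S} (hv : V X = 0) (hm : attMax R V X = 1) :
    grStep R V X = 0 := by
  unfold grStep; rw [hv, hm]; norm_num

end Aux

theorem stmt13 [Fintype S] [Nonempty S] (R : S → S → Prop) [DecidableRel R]
    (V0 : S → ℝ) (hV0 : ∀ X, V0 X ∈ Set.Icc (0:ℝ) 1)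
    (k : ℕ) (hstab : grStable R V0 k) :
    admissible R (inSet (grSeq R V0 k)) ∧
    inSet (grSeq R V0 k) ⊆ inSet V0 ∧
    outSet (grSeq R V0 k) ⊆ outSet V0 ∧
    (∀ h : S → ℝ, (∀ X, h X ∈ Set.Icc (0:ℝ) 1) →
      inSet h ⊆ inSet V0 → outSet h ⊆ outSet V0 →
      (∀ X, h X = 1 → ∀ Y, R Y X → h Y = 0) →
      (∀ X, h X = 0 → ∃ Y, R Y X ∧ h Y = 1) →
      inSet h ⊆ inSet (grSeq R V0 k) ∧ outSet h ⊆ outSet (grSeq R V0 k)) := by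
  have hIcc : ∀ i X, grSeq R V0 i X ∈ Set.Icc (0:ℝ) 1 := by
    intro i
    induction i with
    | zero => exact hV0
    | succ n ih => exact grStep_mem_Icc R _ ih
  set Vk := grSeq R V0 k with hVkdef
  -- Stability consequences
  have hin : ∀ X, Vk X = 1 → ∀ Y, R Y X → Vk Y = 0 := by
    intro X hX
    have h1 : grStep R Vk X = 1 := by
      exact (hstab X (Or.inr hX)).trans hX
    have hm0 := attMax_nonneg R Vk X
    unfold grStep at h1
    rw [hX] at h1
    have hmax : max (1/2 : ℝ) (1 - attMax R Vk X) = 1 := by linarith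
    have hm : attMax R Vk X = 0 := by
      rcases max_cases (1/2 : ℝ) (1 - attMax R Vk X) with ⟨he, _⟩ | ⟨he, _⟩ <;>
        rw [he] at hmax <;> linarith
    exact forall_of_attMax_zero R Vk (fun Y => (hIcc k Y).1) hm
  have hout : ∀ X, Vk X = 0 → ∃ Y, R Y X ∧ Vk Y = 1 := by
    intro X hX
    have h1 : grStep R Vk X = 0 := by
      exact (hstab X (Or.inl hX)).trans hX
    have hm1 := attMax_le_one R Vk (fun Y => (hIcc k Y).2) X
    unfold grStep at h1
    rw [hX] at h1
    have hmin : min (1/2 : ℝ) (1 - attMax R Vk X) = 0 := by linarith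
    have hm : attMax R Vk X = 1 := by
      rcases min_cases (1/2 : ℝ) (1 - attMax R Vk X) with ⟨he, _⟩ | ⟨he, _⟩ <;>
        rw [he] at hmin <;> linarith
    exact exists_of_attMax_one R Vk (fun Y => (hIcc k Y).2) hm
  refine ⟨⟨?_, ?_⟩, ?_, ?_, ?_⟩
  · -- conflict free
    intro X hX Y hY hR
    have := hin Y hY X hR
    rw [hX] at this; norm_num at this
  · -- acceptable
    intro X hX Y hR
    obtain ⟨Z, hZR, hZ1⟩ := hout Y (hin X hX Y hR)
    exact ⟨Z, hZ1, hZR⟩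
  · -- in ⊆ in V0
    intro X hX
    have : ∀ i, grSeq R V0 i X = 1 → V0 X = 1 := by
      intro i
      induction i with
      | zero => exact id
      | succ n ih => exact fun h => ih (grStep_eq_one R _ (hIcc n) h)
    exact this k hX
  · -- out ⊆ out V0
    intro X hX
    have : ∀ i, grSeq R V0 i X = 0 → V0 X = 0 := by
      intro i
      induction i with
      | zero => exact id
      | succ n ih => exact fun h => ih (grStep_eq_zero R _ (hIcc n) h)
    exact this k hX
  · intro h hhIcc hin0 hout0 hleg1 hleg0
    have key : ∀ i, (∀ X, h X = 1 → grSeq R V0 i X = 1) ∧ (∀ X, h X = 0 → grSeq R V0 i X = 0) := by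
      intro i
      induction i with
      | zero => exact ⟨fun X hX => hin0 hX, fun X hX => hout0 hX⟩
      | succ n ih =>
        constructor
        · intro X hX
          have hv : grSeq R V0 n X = 1 := ih.1 X hX
          have hm : attMax R (grSeq R V0 n) X = 0 :=
            attMax_eq_zero R _ (fun Y hR => ih.2 Y (hleg1 X hX Y hR))
          exact grStep_one_of R _ hv hm
        · intro X hX
          have hv : grSeq R V0 n X = 0 := ih.2 X hX
          obtain ⟨Y, hR, hY⟩ := hleg0 X hX
          have hm : attMax R (grSeq R V0 n) X = 1 :=
            attMax_eq_one R _ (fun Z => (hIcc n Z).2) hR (ih.1 Y hY)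
          exact grStep_zero_of R _ hv hm
    exact ⟨fun X hX => (key k).1 X hX, fun X hX => (key k).2 X hX⟩
end
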